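/- Let sm_n be the number of super Motzkin paths of order n and hm_n be the total number of humps in all Motzkin paths of order n. Then sm_n = 2·hm_n + 1. -/
import Mathlib

inductive MStep | U | F | D
deriving DecidableEq

def IsSuperMotzkin (w : List MStep) : Prop :=
  w.count MStep.U = w.count MStep.D

def IsMotzkin (w : List MStep) : Prop :=
  IsSuperMotzkin w ∧ ∀ p, p <+: w → p.count MStep.D ≤ p.count MStep.U

def IsHumpAt (w : List MStep) (i : ℕ) : Prop :=
  ∃ k, w[i]? = some MStep.U ∧ (∀ j < k, w[i + 1 + j]? = some MStep.F) ∧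
    w[i + 1 + k]? = some MStep.D

namespace MStepAux

open MStep

def val : MStep → ℤ
  | .U => 1
  | .F => 0
  | .D => -1

def s (w : List MStep) : ℤ := (w.map val).sum

@[simp] lemma s_nil : s [] = 0 := rfl

@[simp] lemma s_cons (c : MStep) (w : List MStep) : s (c :: w) = val c + s w := by
  simp [s]

@[simp] lemma s_append (a b : List MStep) : s (a ++ b) = s a + s b := by
  simp [s]

@[simp] lemma s_replicate_F (a : ℕ) : s (List.replicate a .F) = 0 := by
  induction a with
  | zero => rfl
  | succ a ih => simp [List.replicate_succ, ih, val]

lemma s_eq_count (w : List MStep) : s w = (w.count U : ℤ) - (w.count D : ℤ) := by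
  induction w with
  | nil => simp
  | cons c t ih =>
    cases c <;> simp [List.count_cons, ih, val] <;> omega

lemma superMotzkin_iff (w : List MStep) : IsSuperMotzkin w ↔ s w = 0 := by
  rw [IsSuperMotzkin, s_eq_count]
  omega

lemma countle_iff (p : List MStep) : p.count D ≤ p.count U ↔ 0 ≤ s p := by
  rw [s_eq_count]; omega

/-- split a prefix of an append -/
lemma prefix_split {p l₁ l₂ : List MStep} (h : p <+: l₁ ++ l₂) :
    p <+: l₁ ∨ ∃ q, q <+: l₂ ∧ p = l₁ ++ q := by
  obtain ⟨t, ht⟩ := h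
  by_cases hl : p.length ≤ l₁.length
  · left
    have h2 := congrArg (List.take p.length) ht
    rw [List.take_append_of_le_length (le_refl p.length)] at h2
    rw [List.take_length, List.take_append_of_le_length hl] at h2
    rw [h2]
    exact List.take_prefix _ _
  · right
    have hl' : l₁.length ≤ p.length := le_of_not_ge hl
    have h1 : p.take l₁.length = l₁ := by
      have h2 := congrArg (List.take l₁.length) ht
      rwa [List.take_append_of_le_length hl', List.take_left] at h2
    have hp : p = l₁ ++ p.drop l₁.length := by
      conv_lhs => rw [← List.take_append_drop l₁.length p]
      rw [h1]
    refine ⟨p.drop l₁.length, ?_, hp⟩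
    have h3 : l₁ ++ (p.drop l₁.length ++ t) = l₁ ++ l₂ := by
      rw [← List.append_assoc, ← hp, ht]
    exact ⟨t, List.append_cancel_left h3⟩

lemma prefix_replicate {p : List MStep} {a : ℕ} (h : p <+: List.replicate a .F) :
    p = List.replicate p.length .F := by
  induction a generalizing p with
  | zero =>
    have : p = [] := List.prefix_nil.mp (by simpa using h)
    simp [this]
  | succ a ih =>
    rcases p with _ | ⟨c, t⟩
    · rfl
    · rw [List.replicate_succ] at h
      rcases List.cons_prefix_cons.mp h with ⟨rfl, ht⟩
      have := ih ht
      simp only [List.length_cons, List.replicate_succ]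
      rw [← this]


/-- uniqueness of the leading-F decomposition -/
lemma lead_unique : ∀ {a b : ℕ} {c d : MStep} {v w : List MStep}, c ≠ .F → d ≠ .F →
    List.replicate a .F ++ c :: v = List.replicate b .F ++ d :: w →
    a = b ∧ c = d ∧ v = w := by
  intro a
  induction a with
  | zero =>
    intro b c d v w hc hd h
    cases b with
    | zero => simpa using h
    | succ b =>
      rw [List.replicate_succ] at h
      simp only [List.replicate_zero, List.nil_append, List.cons_append,
        List.cons.injEq] at h
      exact absurd h.1 hc
  | succ a ih =>
    intro b c d v w hc hd h
    cases b with
    | zero =>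
      rw [List.replicate_succ] at h
      simp only [List.replicate_zero, List.nil_append, List.cons_append,
        List.cons.injEq] at h
      exact absurd h.1.symm hd
    | succ b =>
      rw [List.replicate_succ, List.replicate_succ] at h
      simp only [List.cons_append, List.cons.injEq, true_and] at h
      obtain ⟨h1, h2, h3⟩ := ih hc hd h
      exact ⟨by omega, h2, h3⟩

/-- trichotomy on lists of steps -/
lemma trichotomy (w : List MStep) :
    (w = List.replicate w.length .F) ∨
    (∃ a v, w = List.replicate a .F ++ .U :: v) ∨
    (∃ a v, w = List.replicate a .F ++ .D :: v) := by
  induction w with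
  | nil => left; rfl
  | cons c t ih =>
    cases c with
    | U => exact Or.inr (Or.inl ⟨0, t, rfl⟩)
    | D => exact Or.inr (Or.inr ⟨0, t, rfl⟩)
    | F =>
      rcases ih with h | ⟨a, v, h⟩ | ⟨a, v, h⟩
      · left; rw [List.length_cons, List.replicate_succ, ← h]
      · exact Or.inr (Or.inl ⟨a + 1, v, by rw [List.replicate_succ, List.cons_append, ← h]⟩)
      · exact Or.inr (Or.inr ⟨a + 1, v, by rw [List.replicate_succ, List.cons_append, ← h]⟩)

/-- minimum prefix sum -/
def mps : List MStep → ℤ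
  | [] => 0
  | c :: t => min 0 (val c + mps t)

@[simp] lemma mps_nil : mps [] = 0 := rfl

lemma mps_cons (c : MStep) (t : List MStep) : mps (c :: t) = min 0 (val c + mps t) := rfl

lemma mps_le {p v : List MStep} (h : p <+: v) : mps v ≤ s p := by
  induction v generalizing p with
  | nil => rw [List.prefix_nil.mp h]; simp
  | cons c t ih =>
    rcases p with _ | ⟨d, q⟩
    · rw [mps_cons]; simpa using min_le_left _ _
    · rcases List.cons_prefix_cons.mp h with ⟨rfl, hq⟩
      have h1 := ih hq
      have h2 := min_le_right 0 (val d + mps t)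
      rw [mps_cons, s_cons]
      omega

lemma mps_nonpos (v : List MStep) : mps v ≤ 0 := by
  cases v with
  | nil => simp
  | cons c t => rw [mps_cons]; exact min_le_left _ _

lemma key_step {c : MStep} {y x : List MStep}
    (hy : ∀ p, p <+: y → mps (y ++ .D :: x) < s p)
    (hs : s y - 1 = mps (y ++ .D :: x))
    (hc : val c + mps (y ++ .D :: x) < 0) :
    (∀ p, p <+: c :: y → mps (c :: (y ++ .D :: x)) < s p) ∧
      s (c :: y) - 1 = mps (c :: (y ++ .D :: x)) := by
  have hm : mps (c :: (y ++ .D :: x)) = val c + mps (y ++ .D :: x) := by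
    rw [mps_cons]; exact min_eq_right (le_of_lt hc)
  constructor
  · intro p hp
    rcases p with _ | ⟨d, q⟩
    · rw [hm]; simpa using hc
    · rcases List.cons_prefix_cons.mp hp with ⟨rfl, hq⟩
      have := hy q hq
      rw [hm, s_cons]
      omega
  · rw [hm, s_cons]; omega

/-- existence of the canonical decomposition at the first minimum-attaining D -/
lemma exists_decomp : ∀ (v : List MStep), mps v < 0 →
    ∃ y x, v = y ++ .D :: x ∧ (∀ p, p <+: y → mps v < s p) ∧ s y - 1 = mps v := by
  intro v
  induction v with
  | nil => intro h; simp at h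
  | cons c t ih =>
    intro h
    have hc : val c + mps t < 0 := by
      rw [mps_cons] at h
      rcases min_lt_iff.mp h with h1 | h1
      · omega
      · exact h1
    cases c with
    | U =>
      have ht : mps t < 0 := by have : val U = 1 := rfl; omega
      obtain ⟨y, x, rfl, hy, hs⟩ := ih ht
      obtain ⟨k1, k2⟩ := key_step hy hs hc
      exact ⟨.U :: y, x, rfl, k1, k2⟩
    | F =>
      have ht : mps t < 0 := by have : val F = 0 := rfl; omega
      obtain ⟨y, x, rfl, hy, hs⟩ := ih ht
      obtain ⟨k1, k2⟩ := key_step hy hs hc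
      exact ⟨.F :: y, x, rfl, k1, k2⟩
    | D =>
      by_cases ht : mps t < 0
      · obtain ⟨y, x, rfl, hy, hs⟩ := ih ht
        obtain ⟨k1, k2⟩ := key_step hy hs hc
        exact ⟨.D :: y, x, rfl, k1, k2⟩
      · push_neg at ht
        have ht0 : mps t = 0 := le_antisymm (mps_nonpos t) ht
        have hm : mps (.D :: t) = -1 := by
          rw [mps_cons, ht0]
          have : val D = -1 := rfl
          rw [this]
          simp
        refine ⟨[], t, rfl, ?_, by rw [hm]; simp⟩
        intro p hp
        rw [List.prefix_nil.mp hp, hm]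
        simp

/-- uniqueness of decompositions satisfying the two slope conditions -/
lemma decomp_unique_aux {y x y' x' : List MStep}
    (hx : ∀ p, p <+: x → 0 ≤ s p) (hy' : ∀ p, p <+: y' → s y' ≤ s p)
    (h : y ++ .D :: x = y' ++ .D :: x') (hle : y.length ≤ y'.length) :
    y = y' := by
  by_contra hne
  have hlt : y.length < y'.length := by
    rcases lt_or_eq_of_le hle with h1 | h1
    · exact h1
    · exact absurd (List.append_inj_left h (by omega)) hne
  have e1 : (y ++ .D :: x).take y.length = y := by
    rw [List.take_append_of_le_length (le_refl _), List.take_length]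
  have e2 : (y' ++ .D :: x').take y.length = y'.take y.length :=
    List.take_append_of_le_length (le_of_lt hlt)
  have hyp : y'.take y.length = y := by rw [← e2, ← h, e1]
  have hy'' : y' = y ++ y'.drop y.length := by
    conv_lhs => rw [← List.take_append_drop y.length y', hyp]
  have hrne : y'.drop y.length ≠ [] := by
    intro h0
    have := congrArg List.length h0
    simp only [List.length_drop, List.length_nil] at this
    omega
  obtain ⟨d, z, hdz⟩ := List.exists_cons_of_ne_nil hrne
  rw [hdz] at hy''
  rw [hy'', List.append_assoc] at h
  have h4 : (.D : MStep) :: x = d :: z ++ .D :: x' := List.append_cancel_left h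
  simp only [List.cons_append, List.cons.injEq] at h4
  obtain ⟨rfl, h5⟩ := h4
  have hDval : val .D = -1 := rfl
  have hz1 : (1 : ℤ) ≤ s z := by
    have h6 := hx (z ++ [.D]) ⟨x', by simp [h5]⟩
    simp only [s_append, s_cons, s_nil, hDval] at h6
    omega
  have hz2 : s z ≤ 0 := by
    have h7 := hy' (y ++ [.D]) ⟨z, by simp [hy'']⟩
    have h8 : s y' = s y + -1 + s z := by
      rw [hy'']
      simp only [s_append, s_cons, s_nil, hDval]
      ring
    simp only [s_append, s_cons, s_nil, hDval] at h7
    omega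
  omega

lemma decomp_unique {y x y' x' : List MStep}
    (hx : ∀ p, p <+: x → 0 ≤ s p) (hy : ∀ p, p <+: y → s y ≤ s p)
    (hx' : ∀ p, p <+: x' → 0 ≤ s p) (hy' : ∀ p, p <+: y' → s y' ≤ s p)
    (h : y ++ .D :: x = y' ++ .D :: x') : y = y' ∧ x = x' := by
  have heq : y = y' := by
    rcases le_total y.length y'.length with hle | hle
    · exact decomp_unique_aux hx hy' h hle
    · exact (decomp_unique_aux hx' hy h.symm hle).symm
  subst heq
  exact ⟨rfl, by simpa using List.append_cancel_left h⟩


instance : Fintype MStep :=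
  ⟨{MStep.U, MStep.F, MStep.D}, by intro x; cases x <;> decide⟩

lemma getElem?_some_lt {l : List MStep} {i : ℕ} {c : MStep} (h : l[i]? = some c) :
    i < l.length := by
  by_contra h'
  rw [List.getElem?_eq_none (le_of_not_gt h')] at h
  cases h

lemma finite_aux (n : ℕ) (P : List MStep → Prop) :
    Finite {w : List MStep // w.length = n ∧ P w} := by
  apply Finite.of_injective
    (fun w : {w : List MStep // w.length = n ∧ P w} =>
      (fun i : Fin n => w.val.get ⟨i.1, by rw [w.2.1]; exact i.2⟩ : Fin n → MStep))
  intro w1 w2 hww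
  apply Subtype.ext
  apply List.ext_get (by rw [w1.2.1, w2.2.1])
  intro i h1 h2
  have := congrFun hww ⟨i, by rw [← w1.2.1]; exact h1⟩
  simpa using this

lemma finite_humps (n : ℕ) :
    Finite {p : List MStep × ℕ // p.1.length = n ∧ IsMotzkin p.1 ∧ IsHumpAt p.1 p.2} := by
  have h1 : Finite {w : List MStep // w.length = n ∧ True} := finite_aux n _
  apply Finite.of_injective
    (fun p : {p : List MStep × ℕ // p.1.length = n ∧ IsMotzkin p.1 ∧ IsHumpAt p.1 p.2} =>
      ((⟨p.val.1, p.2.1, trivial⟩ : {w : List MStep // w.length = n ∧ True}),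
        (⟨p.val.2, by
          obtain ⟨k, hU, _, _⟩ := p.2.2.2
          have := getElem?_some_lt hU
          omega⟩ : Fin (n + 1))))
  intro p q h
  simp only [Prod.mk.injEq, Subtype.mk.injEq, Fin.mk.injEq] at h
  exact Subtype.ext (Prod.ext h.1 h.2)


@[simp] lemma val_U : val .U = 1 := rfl
@[simp] lemma val_F : val .F = 0 := rfl
@[simp] lemma val_D : val .D = -1 := rfl

def Tset (n : ℕ) := {z : List MStep × ℕ × List MStep //
  (∀ p, p <+: z.1 → 0 ≤ s p) ∧ (∀ p, p <+: z.2.2 → s z.2.2 ≤ s p) ∧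
  s z.1 + s z.2.2 = 0 ∧ z.1.length + z.2.1 + z.2.2.length + 2 = n}

def SUset (n : ℕ) := {w : List MStep // w.length = n ∧ IsSuperMotzkin w ∧
  ∃ a v, w = List.replicate a .F ++ .U :: v}

def SDset (n : ℕ) := {w : List MStep // w.length = n ∧ IsSuperMotzkin w ∧
  ∃ a v, w = List.replicate a .F ++ .D :: v}

def g3 (n : ℕ) (z : Tset n) : SUset n := by
  refine ⟨List.replicate z.val.2.1 .F ++ .U :: (z.val.2.2 ++ .D :: z.val.1), ?_, ?_, ?_⟩
  · obtain ⟨h1, h2, h3, h4⟩ := z.2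
    simp only [List.length_append, List.length_replicate, List.length_cons]
    omega
  · obtain ⟨h1, h2, h3, h4⟩ := z.2
    rw [superMotzkin_iff]
    simp only [s_append, s_cons, s_replicate_F, val_U, val_D]
    omega
  · exact ⟨z.val.2.1, _, rfl⟩

lemma g3_bij (n : ℕ) : Function.Bijective (g3 n) := by
  constructor
  · rintro ⟨⟨x, a, y⟩, hx, hy, hs, hl⟩ ⟨⟨x', a', y'⟩, hx', hy', hs', hl'⟩ h
    have h' : List.replicate a .F ++ .U :: (y ++ .D :: x)
        = List.replicate a' .F ++ .U :: (y' ++ .D :: x') := congrArg Subtype.val h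
    obtain ⟨rfl, -, h2⟩ := lead_unique (show (MStep.U) ≠ .F by simp)
      (show (MStep.U) ≠ .F by simp) h'
    obtain ⟨rfl, rfl⟩ := decomp_unique hx hy hx' hy' h2
    rfl
  · rintro ⟨w, hlen, hsm, a, v, rfl⟩
    have hsw : s (List.replicate a .F ++ .U :: v) = 0 := (superMotzkin_iff _).mp hsm
    have hsv : s v = -1 := by
      simp only [s_append, s_cons, s_replicate_F, val_U] at hsw
      omega
    have hmv : mps v < 0 := by
      have := mps_le (List.prefix_refl v)
      omega
    obtain ⟨y, x, rfl, hy, hs⟩ := exists_decomp v hmv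
    have hsd : s (y ++ .D :: x) = -1 := hsv
    have hsplit : s y + -1 + s x = -1 := by
      simp only [s_append, s_cons, val_D] at hsd
      omega
    refine ⟨⟨⟨x, a, y⟩, ?_, ?_, ?_, ?_⟩, rfl⟩
    · show ∀ p, p <+: x → 0 ≤ s p
      intro p hp
      obtain ⟨t, ht⟩ := hp
      have hpre : (y ++ .D :: p) <+: (y ++ .D :: x) :=
        ⟨t, by simp only [List.append_assoc, List.cons_append, ht]⟩
      have := mps_le hpre
      simp only [s_append, s_cons, val_D] at this
      omega
    · show ∀ p, p <+: y → s y ≤ s p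
      intro p hp
      have := hy p hp
      omega
    · show s x + s y = 0
      omega
    · show x.length + a + y.length + 2 = n
      simp only [List.length_append, List.length_replicate, List.length_cons] at hlen
      omega


lemma rebuild : ∀ (k : ℕ) (l : List MStep), (∀ j, j < k → l[j]? = some .F) →
    l[k]? = some .D → l = List.replicate k .F ++ .D :: l.drop (k + 1) := by
  intro k
  induction k with
  | zero =>
    intro l _ hD
    cases l with
    | nil => cases hD
    | cons c t =>
      have hc : c = .D := by simpa using hD
      subst hc
      simp
  | succ k ih =>
    intro l hF hD
    cases l with
    | nil => cases hD
    | cons c t =>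
      have hc : c = .F := by have := hF 0 (by omega); simpa using this
      subst hc
      have ht : t = List.replicate k .F ++ .D :: t.drop (k + 1) := by
        apply ih
        · intro j hj
          have := hF (j + 1) (by omega)
          simpa using this
        · simpa using hD
      rw [List.replicate_succ, List.cons_append]
      have h2 : (MStep.F :: t).drop (k + 1 + 1) = t.drop (k + 1) := rfl
      rw [h2, ← ht]

lemma reconstruct {M : List MStep} {i k : ℕ} (hU : M[i]? = some .U)
    (hF : ∀ j, j < k → M[i + 1 + j]? = some .F) (hD : M[i + 1 + k]? = some .D) :
    M = M.take i ++ .U :: (List.replicate k .F ++ .D :: M.drop (i + k + 2)) := by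
  have hi : i < M.length := getElem?_some_lt hU
  have hMi : M[i] = .U := by
    have h1 : M[i]? = some M[i] := List.getElem?_eq_getElem hi
    rw [hU] at h1
    exact (Option.some.inj h1).symm
  have hdrop : M.drop i = .U :: M.drop (i + 1) := by
    rw [List.drop_eq_getElem_cons hi, hMi]
  have inner : M.drop (i + 1) = List.replicate k .F ++ .D :: ((M.drop (i + 1)).drop (k + 1)) := by
    apply rebuild
    · intro j hj
      rw [List.getElem?_drop]
      exact hF j hj
    · rw [List.getElem?_drop]
      exact hD
  have hdd : (M.drop (i + 1)).drop (k + 1) = M.drop (i + k + 2) := by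
    rw [List.drop_drop]
    congr 1
    omega
  rw [hdd] at inner
  conv_lhs => rw [← List.take_append_drop i M, hdrop, inner]

def Aset (n : ℕ) := {p : List MStep × ℕ //
  p.1.length = n ∧ IsMotzkin p.1 ∧ IsHumpAt p.1 p.2}

lemma getElem?_mid (x r : List MStep) (c : MStep) (j : ℕ) :
    (x ++ c :: r)[x.length + 1 + j]? = r[j]? := by
  rw [List.getElem?_append_right (by omega : x.length ≤ x.length + 1 + j)]
  have h1 : x.length + 1 + j - x.length = j + 1 := by omega
  rw [h1]
  simp

lemma getElem?_at (x r : List MStep) (c : MStep) :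
    (x ++ c :: r)[x.length]? = some c := by
  rw [List.getElem?_append_right (le_refl _)]
  simp

def g4 (n : ℕ) (z : Tset n) : Aset n := by
  refine ⟨(z.val.1 ++ .U :: (List.replicate z.val.2.1 .F ++ .D :: z.val.2.2), z.val.1.length),
    ?_, ⟨?_, ?_⟩, ?_⟩
  · obtain ⟨h1, h2, h3, h4⟩ := z.2
    simp only [List.length_append, List.length_replicate, List.length_cons]
    omega
  · obtain ⟨h1, h2, h3, h4⟩ := z.2
    show IsSuperMotzkin (z.val.1 ++ .U :: (List.replicate z.val.2.1 .F ++ .D :: z.val.2.2))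
    rw [superMotzkin_iff]
    simp only [s_append, s_cons, s_replicate_F, val_U, val_D]
    omega
  · obtain ⟨h1, h2, h3, h4⟩ := z.2
    show ∀ p, p <+: (z.val.1 ++ .U :: (List.replicate z.val.2.1 .F ++ .D :: z.val.2.2)) →
      p.count .D ≤ p.count .U
    intro p hp
    rw [countle_iff]
    have hsx : 0 ≤ s z.val.1 := h1 _ (List.prefix_refl _)
    rcases prefix_split hp with hpx | ⟨q, hq, rfl⟩
    · exact h1 p hpx
    · rcases q with _ | ⟨c, q⟩
      · simpa using hsx
      · obtain ⟨rfl, hq2⟩ := List.cons_prefix_cons.mp hq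
        rcases prefix_split hq2 with hq3 | ⟨r, hr, rfl⟩
        · have hq4 := prefix_replicate hq3
          have hsq : s q = 0 := by rw [hq4]; simp
          simp only [s_append, s_cons, val_U, hsq]
          omega
        · rcases r with _ | ⟨d, r⟩
          · simp only [List.append_nil, s_append, s_cons, s_replicate_F, val_U]
            omega
          · obtain ⟨rfl, hr2⟩ := List.cons_prefix_cons.mp hr
            have := h2 r hr2
            simp only [s_append, s_cons, s_replicate_F, val_U, val_D]
            omega
  · show IsHumpAt (z.val.1 ++ .U :: (List.replicate z.val.2.1 .F ++ .D :: z.val.2.2))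
      z.val.1.length
    refine ⟨z.val.2.1, getElem?_at _ _ _, ?_, ?_⟩
    · intro j hj
      rw [getElem?_mid]
      rw [List.getElem?_append]
      simp [hj]
    · rw [getElem?_mid]
      rw [List.getElem?_append_right (by simp : (List.replicate z.val.2.1 MStep.F).length ≤ z.val.2.1)]
      simp


lemma g4_bij (n : ℕ) : Function.Bijective (g4 n) := by
  constructor
  · rintro ⟨⟨x, a, y⟩, hx, hy, hs, hl⟩ ⟨⟨x', a', y'⟩, hx', hy', hs', hl'⟩ h
    have h' := congrArg Subtype.val h
    have h1 : x ++ .U :: (List.replicate a .F ++ .D :: y)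
        = x' ++ .U :: (List.replicate a' .F ++ .D :: y') := congrArg Prod.fst h'
    have h2 : x.length = x'.length := congrArg Prod.snd h'
    have h3 : x = x' := List.append_inj_left h1 h2
    subst h3
    have h4 := List.append_cancel_left h1
    simp only [List.cons.injEq, true_and] at h4
    obtain ⟨rfl, -, rfl⟩ := lead_unique (show (MStep.D) ≠ .F by simp)
      (show (MStep.D) ≠ .F by simp) h4
    rfl
  · rintro ⟨⟨M, i⟩, hlen, hM, hH⟩
    obtain ⟨k, hU, hF, hD⟩ := hH
    have hlen' : M.length = n := hlen
    have hi : i < M.length := getElem?_some_lt hU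
    have hrec : M = M.take i ++ .U :: (List.replicate k .F ++ .D :: M.drop (i + k + 2)) :=
      reconstruct hU hF hD
    have hxl : (M.take i).length = i := by rw [List.length_take]; omega
    have hsM : s M = 0 := (superMotzkin_iff M).mp hM.1
    have hsM2 : s (M.take i) + s (M.drop (i + k + 2)) = 0 := by
      rw [hrec] at hsM
      simp only [s_append, s_cons, s_replicate_F, val_U, val_D] at hsM
      omega
    refine ⟨⟨⟨M.take i, k, M.drop (i + k + 2)⟩, ?_, ?_, ?_, ?_⟩, ?_⟩
    · show ∀ p, p <+: M.take i → 0 ≤ s p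
      intro p hp
      rw [← countle_iff]
      exact (hM.2 : ∀ p, p <+: M → _) p (hp.trans (List.take_prefix i M))
    · show ∀ p, p <+: M.drop (i + k + 2) → s (M.drop (i + k + 2)) ≤ s p
      intro p hp
      obtain ⟨t, ht⟩ := hp
      have hpre : (M.take i ++ .U :: (List.replicate k .F ++ .D :: p)) <+: M := by
        refine ⟨t, ?_⟩
        conv_rhs => rw [hrec]
        simp only [List.append_assoc, List.cons_append, ht]
      have h5 := (hM.2 : ∀ p, p <+: M → _) _ hpre
      rw [countle_iff] at h5
      simp only [s_append, s_cons, s_replicate_F, val_U, val_D] at h5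
      omega
    · show s (M.take i) + s (M.drop (i + k + 2)) = 0
      exact hsM2
    · show (M.take i).length + k + (M.drop (i + k + 2)).length + 2 = n
      have h6 := congrArg List.length hrec
      simp only [List.length_append, List.length_cons, List.length_replicate] at h6
      omega
    · apply Subtype.ext
      show (M.take i ++ .U :: (List.replicate k .F ++ .D :: M.drop (i + k + 2)),
        (M.take i).length) = (M, i)
      rw [← hrec, hxl]


def Sset (n : ℕ) := {w : List MStep // w.length = n ∧ IsSuperMotzkin w}

def conj : MStep → MStep
  | .U => .D
  | .D => .U
  | .F => .F

@[simp] lemma conj_U : conj .U = .D := rfl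
@[simp] lemma conj_D : conj .D = .U := rfl
@[simp] lemma conj_F : conj .F = .F := rfl
@[simp] lemma conj_conj (c : MStep) : conj (conj c) = c := by cases c <;> rfl

@[simp] lemma map_conj_map_conj (w : List MStep) : (w.map conj).map conj = w := by
  induction w with
  | nil => rfl
  | cons c t ih => simp [ih]

@[simp] lemma val_conj (c : MStep) : val (conj c) = -val c := by cases c <;> rfl

@[simp] lemma s_map_conj (w : List MStep) : s (w.map conj) = -s w := by
  induction w with
  | nil => simp
  | cons c t ih => simp [ih]; ring

lemma mem_SD_map {n : ℕ} (w : List MStep) (h : w.length = n ∧ IsSuperMotzkin w ∧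
    ∃ a v, w = List.replicate a .F ++ .U :: v) :
    (w.map conj).length = n ∧ IsSuperMotzkin (w.map conj) ∧
    ∃ a v, w.map conj = List.replicate a .F ++ .D :: v := by
  obtain ⟨h1, h2, a, v, h3⟩ := h
  refine ⟨by simpa using h1, ?_, a, v.map conj, ?_⟩
  · rw [superMotzkin_iff] at *
    simp [h2]
  · rw [h3]
    simp [List.map_append, List.map_replicate]

lemma mem_SU_map {n : ℕ} (w : List MStep) (h : w.length = n ∧ IsSuperMotzkin w ∧
    ∃ a v, w = List.replicate a .F ++ .D :: v) :
    (w.map conj).length = n ∧ IsSuperMotzkin (w.map conj) ∧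
    ∃ a v, w.map conj = List.replicate a .F ++ .U :: v := by
  obtain ⟨h1, h2, a, v, h3⟩ := h
  refine ⟨by simpa using h1, ?_, a, v.map conj, ?_⟩
  · rw [superMotzkin_iff] at *
    simp [h2]
  · rw [h3]
    simp [List.map_append, List.map_replicate]

def g2 (n : ℕ) (w : SDset n) : SUset n := ⟨w.val.map conj, mem_SU_map w.val w.2⟩

lemma conj_comp : conj ∘ conj = id := funext conj_conj

lemma g2_bij (n : ℕ) : Function.Bijective (g2 n) := by
  constructor
  · intro w1 w2 h
    have h' : w1.val.map conj = w2.val.map conj := congrArg Subtype.val h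
    apply Subtype.ext
    have := congrArg (List.map conj) h'
    rw [List.map_map, List.map_map, conj_comp, List.map_id, List.map_id] at this
    exact this
  · intro u
    refine ⟨⟨u.val.map conj, mem_SD_map u.val u.2⟩, ?_⟩
    apply Subtype.ext
    show (u.val.map conj).map conj = u.val
    rw [List.map_map, conj_comp, List.map_id]

def g1 (n : ℕ) : (SUset n ⊕ SDset n) ⊕ PUnit → Sset n
  | .inl (.inl u) => ⟨u.val, u.2.1, u.2.2.1⟩
  | .inl (.inr d) => ⟨d.val, d.2.1, d.2.2.1⟩
  | .inr _ => ⟨List.replicate n .F, by simp, by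
      rw [IsSuperMotzkin]
      simp [List.count_replicate]⟩

lemma no_lead_rep {a m : ℕ} {c : MStep} {v : List MStep} (hc : c ≠ .F)
    (h : List.replicate a .F ++ c :: v = List.replicate m .F) : False := by
  have h1 := congrArg (List.count c) h
  simp [List.count_append, List.count_replicate, List.count_cons, Ne.symm hc] at h1

lemma g1_bij (n : ℕ) : Function.Bijective (g1 n) := by
  constructor
  · rintro (u1 | p1) (u2 | p2) h
    · rcases u1 with u1 | d1 <;> rcases u2 with u2 | d2
      · have hv := congrArg Subtype.val h
        have hv' : u1.val = u2.val := hv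
        simp only [Sum.inl.injEq]
        exact Subtype.ext hv'
      · have hv0 := congrArg Subtype.val h
        have hv : u1.val = d2.val := hv0
        obtain ⟨a, v, h3⟩ := u1.2.2.2
        obtain ⟨b, v', h4⟩ := d2.2.2.2
        have h5 := lead_unique (show (MStep.U) ≠ .F by simp) (show (MStep.D) ≠ .F by simp)
          (by rw [← h3, ← h4, hv])
        exact absurd h5.2.1 (by simp)
      · have hv0 := congrArg Subtype.val h
        have hv : d1.val = u2.val := hv0
        obtain ⟨a, v, h3⟩ := d1.2.2.2
        obtain ⟨b, v', h4⟩ := u2.2.2.2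
        have h5 := lead_unique (show (MStep.D) ≠ .F by simp) (show (MStep.U) ≠ .F by simp)
          (by rw [← h3, ← h4, hv])
        exact absurd h5.2.1 (by simp)
      · have hv := congrArg Subtype.val h
        have hv' : d1.val = d2.val := hv
        simp only [Sum.inl.injEq, Sum.inr.injEq]
        exact Subtype.ext hv'
    · rcases u1 with u1 | d1
      · have hv0 := congrArg Subtype.val h
        have hv : u1.val = List.replicate n .F := hv0
        obtain ⟨a, v, h3⟩ := u1.2.2.2
        exact absurd (by rw [← h3]; exact hv) (fun hh =>
          no_lead_rep (show (MStep.U) ≠ .F by simp) hh)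
      · have hv0 := congrArg Subtype.val h
        have hv : d1.val = List.replicate n .F := hv0
        obtain ⟨a, v, h3⟩ := d1.2.2.2
        exact absurd (by rw [← h3]; exact hv) (fun hh =>
          no_lead_rep (show (MStep.D) ≠ .F by simp) hh)
    · rcases u2 with u2 | d2
      · have hv0 := congrArg Subtype.val h
        have hv : u2.val = List.replicate n .F := hv0.symm
        obtain ⟨a, v, h3⟩ := u2.2.2.2
        exact absurd (by rw [← h3]; exact hv) (fun hh =>
          no_lead_rep (show (MStep.U) ≠ .F by simp) hh)
      · have hv0 := congrArg Subtype.val h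
        have hv : d2.val = List.replicate n .F := hv0.symm
        obtain ⟨a, v, h3⟩ := d2.2.2.2
        exact absurd (by rw [← h3]; exact hv) (fun hh =>
          no_lead_rep (show (MStep.D) ≠ .F by simp) hh)
    · cases p1; cases p2; rfl
  · rintro ⟨w, hlen, hsm⟩
    rcases trichotomy w with h | ⟨a, v, h⟩ | ⟨a, v, h⟩
    · refine ⟨.inr PUnit.unit, Subtype.ext ?_⟩
      show List.replicate n .F = w
      rw [h, hlen]
    · exact ⟨.inl (.inl ⟨w, hlen, hsm, a, v, h⟩), rfl⟩
    · exact ⟨.inl (.inr ⟨w, hlen, hsm, a, v, h⟩), rfl⟩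


lemma finite_SU (n : ℕ) : Finite (SUset n) := finite_aux n _
lemma finite_SD (n : ℕ) : Finite (SDset n) := finite_aux n _

end MStepAux

open MStepAux

theorem superMotzkin_eq_two_mul_humps_add_one (n : ℕ) :
    Nat.card {w : List MStep // w.length = n ∧ IsSuperMotzkin w} =
      2 * Nat.card {p : List MStep × ℕ //
        p.1.length = n ∧ IsMotzkin p.1 ∧ IsHumpAt p.1 p.2} + 1 := by
  haveI := finite_SU n
  haveI := finite_SD n
  have c3 : Nat.card (Tset n) = Nat.card (SUset n) :=
    Nat.card_eq_of_bijective _ (g3_bij n)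
  have c4 : Nat.card (Tset n) = Nat.card (Aset n) :=
    Nat.card_eq_of_bijective _ (g4_bij n)
  have c2 : Nat.card (SDset n) = Nat.card (SUset n) :=
    Nat.card_eq_of_bijective _ (g2_bij n)
  have c1 : Nat.card ((SUset n ⊕ SDset n) ⊕ (PUnit : Type)) = Nat.card (Sset n) :=
    Nat.card_eq_of_bijective _ (g1_bij n)
  rw [Nat.card_sum, Nat.card_sum] at c1
  have cP : Nat.card (PUnit : Type) = 1 := Nat.card_unique
  show Nat.card (Sset n) = 2 * Nat.card (Aset n) + 1
  omega
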